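/- If W is a modular set in a matroid M and e ∈ cl(W) \ W, then either e is a loop of M or e is parallel to some element of W (i.e., there exists w ∈ W with r({e, w}) = 1). -/

import Mathlib

open Set Matroid

variable {α : Type*}

/-- The rank of a set in a matroid: the supremum of cardinalities of independent subsets. -/
noncomputable def mrk (M : Matroid α) (X : Set α) : ℕ :=
  sSup {n | ∃ I, M.Indep I ∧ I ⊆ X ∧ I.ncard = n}

/-- A set `X` is modular in `M` if the rank equality holds against every flat. -/
def IsModular (M : Matroid α) (X : Set α) : Prop :=
  ∀ F, M.IsFlat F → mrk M X + mrk M F = mrk M (X ∪ F) + mrk M (X ∩ F)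

/-- A matroid is simple if every subset of the ground set with at most two elements
is independent (no loops and no parallel pairs). -/
def MSimple (M : Matroid α) : Prop :=
  ∀ X ⊆ M.E, X.ncard ≤ 2 → M.Indep X

/-- Deletion of a set of elements. -/
def mdelete (M : Matroid α) (D : Set α) : Matroid α := M ↾ (M.E \ D)

/-- Contraction of a set of elements, defined by duality. -/
def mcontract (M : Matroid α) (C : Set α) : Matroid α := (M✶ ↾ (M.E \ C))✶

/-- `N` is a minor of `M` if it is obtained by a contraction followed by a deletion. -/
def IsMinorOf (N M : Matroid α) : Prop := ∃ C D, N = mdelete (mcontract M C) D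

/-- A matroid is connected: it has no 1-separation. -/
def MConnected (M : Matroid α) : Prop :=
  ∀ A B : Set α, A ∪ B = M.E → Disjoint A B → A.Nonempty → B.Nonempty →
    mrk M M.E + 1 ≤ mrk M A + mrk M B

/-- A matroid is 3-connected: connected with no 2-separation. -/
def ThreeConnected (M : Matroid α) : Prop :=
  MConnected M ∧ ∀ A B : Set α, A ∪ B = M.E → Disjoint A B →
    2 ≤ A.ncard → 2 ≤ B.ncard → mrk M M.E + 2 ≤ mrk M A + mrk M B

/-- `M` is (isomorphic to) the uniform matroid `U_{r,n}`. -/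
def IsUnif (M : Matroid α) (r n : ℕ) : Prop :=
  M.E.Finite ∧ M.E.ncard = n ∧ ∀ I ⊆ M.E, (M.Indep I ↔ I.ncard ≤ r)

/-- `M` has a `U_{r,n}`-minor. -/
def HasUnifMinor (M : Matroid α) (r n : ℕ) : Prop :=
  ∃ N, IsMinorOf N M ∧ IsUnif N r n

/-- `M` is (isomorphic to) the Fano matroid `F₇`: a simple rank-3 matroid on 7
elements in which every line has exactly 3 points. -/
def IsFano (M : Matroid α) : Prop :=
  M.E.Finite ∧ M.E.ncard = 7 ∧ MSimple M ∧ mrk M M.E = 3 ∧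
    ∀ L, M.IsFlat L → mrk M L = 2 → L.ncard = 3

/-- `L` is a 4-point line of `M`: a rank-2 flat that is the union of exactly
four rank-1 flats. -/
def FourPointLine (M : Matroid α) (L : Set α) : Prop :=
  M.IsFlat L ∧ mrk M L = 2 ∧
    ∃ f : Fin 4 → Set α, Function.Injective f ∧
      (∀ i, M.IsFlat (f i) ∧ mrk M (f i) = 1) ∧ L = ⋃ i, f i

/-- A circuit: a minimal dependent set. -/
def MCircuit (M : Matroid α) (C : Set α) : Prop :=
  C ⊆ M.E ∧ ¬ M.Indep C ∧ ∀ x ∈ C, M.Indep (C \ {x})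

/-- `M` is (isomorphic to) `P₆`: the 6-element simple rank-3 matroid with exactly
one triangle, whose complement is a triad. -/
def IsP6 (M : Matroid α) : Prop :=
  M.E.Finite ∧ M.E.ncard = 6 ∧ MSimple M ∧ mrk M M.E = 3 ∧
    ∃ T, MCircuit M T ∧ T.ncard = 3 ∧ MCircuit M✶ (M.E \ T) ∧
      ∀ T', MCircuit M T' → T'.ncard = 3 → T' = T

/-- `C` is a circuit-hyperplane of `M`. -/
def CircuitHyperplane (M : Matroid α) (C : Set α) : Prop :=
  MCircuit M C ∧ M.IsFlat C ∧ mrk M C + 1 = mrk M M.E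

/-- `N` is obtained from `M` by relaxing the circuit-hyperplane `C`. -/
def IsRelaxationOf (N M : Matroid α) (C : Set α) : Prop :=
  N.E = M.E ∧ CircuitHyperplane M C ∧ ∀ I ⊆ M.E, (N.Indep I ↔ (M.Indep I ∨ I = C))

/-- `N` is (isomorphic to) the non-Fano matroid `F₇⁻`: a relaxation of a
circuit-hyperplane of the Fano matroid. -/
def IsNonFano (N : Matroid α) : Prop :=
  ∃ (M : Matroid α) (C : Set α), IsFano M ∧ IsRelaxationOf N M C

/-- Isomorphism of matroids on the same ground type. -/
def IsIso (M N : Matroid α) : Prop :=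
  ∃ f : α → α, Set.InjOn f M.E ∧ f '' M.E = N.E ∧
    ∀ I ⊆ M.E, (M.Indep I ↔ N.Indep (f '' I))

/-- `M` is representable over the field `𝔽`. -/
def Representable (M : Matroid α) (𝔽 : Type) [Field 𝔽] : Prop :=
  ∃ (n : ℕ) (φ : α → (Fin n → 𝔽)), ∀ I ⊆ M.E,
    (M.Indep I ↔ LinearIndependent 𝔽 (I.restrict φ))

/-- `L` is a modular 4-point line of `M`. -/
def ModularFourPointLine (M : Matroid α) (L : Set α) : Prop :=
  FourPointLine M L ∧ IsModular M L


section AuxMrk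

private lemma mrkSet_nonempty (M : Matroid α) (X : Set α) :
    {n | ∃ I, M.Indep I ∧ I ⊆ X ∧ I.ncard = n}.Nonempty :=
  ⟨0, ∅, M.empty_indep, empty_subset _, by simp⟩

private lemma mrkSet_bdd (M : Matroid α) (hfin : M.E.Finite) (X : Set α) :
    BddAbove {n | ∃ I, M.Indep I ∧ I ⊆ X ∧ I.ncard = n} := by
  refine ⟨M.E.ncard, ?_⟩
  rintro n ⟨I, hI, -, rfl⟩
  exact Set.ncard_le_ncard hI.subset_ground hfin

private lemma mrk_eq_of_basis' (M : Matroid α) (hfin : M.E.Finite) {I X : Set α}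
    (hI : M.IsBasis' I X) : mrk M X = I.ncard := by
  refine le_antisymm (csSup_le (mrkSet_nonempty M X) ?_)
    (le_csSup (mrkSet_bdd M hfin X) ⟨I, hI.indep, hI.subset, rfl⟩)
  rintro n ⟨J, hJ, hJX, rfl⟩
  obtain ⟨I', hI', hJI'⟩ := hJ.subset_isBasis'_of_subset hJX
  have hcard := hI'.encard_eq_encard hI
  have hI'fin : I'.Finite := hfin.subset hI'.indep.subset_ground
  calc J.ncard ≤ I'.ncard := Set.ncard_le_ncard hJI' hI'fin
    _ = I.ncard := by rw [Set.ncard_def, Set.ncard_def, hcard]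

private lemma mrk_eq_of_basis (M : Matroid α) (hfin : M.E.Finite) {I X : Set α}
    (hI : M.IsBasis I X) : mrk M X = I.ncard :=
  mrk_eq_of_basis' M hfin hI.isBasis'

private lemma mrk_mono (M : Matroid α) (hfin : M.E.Finite) {X Y : Set α} (h : X ⊆ Y) :
    mrk M X ≤ mrk M Y := by
  refine csSup_le (mrkSet_nonempty M X) ?_
  rintro n ⟨I, hI, hIX, rfl⟩
  exact le_csSup (mrkSet_bdd M hfin Y) ⟨I, hI, hIX.trans h, rfl⟩

private lemma flat_closure' (M : Matroid α) (X : Set α) : M.IsFlat (M.closure X) := by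
  rw [Matroid.closure_def, sInter_eq_iInter]
  have : Nonempty {F // F ∈ {F | M.IsFlat F ∧ X ∩ M.E ⊆ F}} :=
    ⟨⟨M.E, M.ground_isFlat, inter_subset_right⟩⟩
  exact Matroid.IsFlat.iInter fun i ↦ i.2.1

end AuxMrk

/-- If `W` is modular and `e ∈ cl(W) \ W`, then `e` is a loop or is parallel to
an element of `W`. -/
theorem stmt3 (M : Matroid α) (hfin : M.E.Finite) (W : Set α) (hW : W ⊆ M.E)
    (hmod : IsModular M W) (e : α) (he : e ∈ M.closure W \ W) :
    mrk M {e} = 0 ∨ ∃ w ∈ W, mrk M {e} = 1 ∧ mrk M {w} = 1 ∧ mrk M ({e, w} : Set α) = 1 := by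
  obtain ⟨hecl, heW⟩ := he
  have heE : e ∈ M.E := M.closure_subset_ground W hecl
  by_cases hind : M.Indep {e}
  · -- e is not a loop; find a parallel element
    right
    have hmrk_e : mrk M {e} = 1 := by
      rw [mrk_eq_of_basis' M hfin hind.isBasis_self.isBasis']
      simp
    set F := M.closure {e} with hF
    have hFflat : M.IsFlat F := flat_closure' M _
    have hmrkF : mrk M F = 1 := by
      rw [mrk_eq_of_basis M hfin hind.isBasis_closure]; simp
    have hFsub : F ⊆ M.closure W :=
      M.closure_subset_closure_of_subset_closure (by simpa using hecl)
    have hWF : mrk M (W ∪ F) = mrk M W := by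
      refine le_antisymm ?_ (mrk_mono M hfin subset_union_left)
      have h1 : W ∪ F ⊆ M.closure W :=
        union_subset (M.subset_closure W) hFsub
      have h2 : mrk M (M.closure W) = mrk M W := by
        obtain ⟨I, hI⟩ := M.exists_isBasis' W
        rw [mrk_eq_of_basis M hfin hI.isBasis_closure_right, mrk_eq_of_basis' M hfin hI]
      exact h2 ▸ mrk_mono M hfin h1
    have heq := hmod F hFflat
    rw [hmrkF, hWF] at heq
    have hWFint : mrk M (W ∩ F) = 1 := by omega
    have hmem : mrk M (W ∩ F) ∈ {n | ∃ I, M.Indep I ∧ I ⊆ W ∩ F ∧ I.ncard = n} :=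
      Nat.sSup_mem (mrkSet_nonempty M _) (mrkSet_bdd M hfin _)
    obtain ⟨I, hI, hIsub, hIcard⟩ := hmem
    rw [hWFint] at hIcard
    obtain ⟨w, rfl⟩ := Set.ncard_eq_one.mp hIcard
    have hwW : w ∈ W := (hIsub (Set.mem_singleton w)).1
    have hwF : w ∈ F := (hIsub (Set.mem_singleton w)).2
    refine ⟨w, hwW, hmrk_e, ?_, ?_⟩
    · rw [mrk_eq_of_basis' M hfin hI.isBasis_self.isBasis']; simp
    · have hsub : ({e, w} : Set α) ⊆ F := by
        rintro x (h | rfl)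
        · rw [h]; exact M.subset_closure ({e} : Set α) hind.subset_ground rfl
        · exact hwF
      have h1 : mrk M ({e, w} : Set α) ≤ 1 := hmrkF ▸ mrk_mono M hfin hsub
      have h2 : 1 ≤ mrk M ({e, w} : Set α) := by
        rw [← hmrk_e]
        exact mrk_mono M hfin (by simp)
      omega
  · -- e is a loop
    left
    refine le_antisymm (csSup_le (mrkSet_nonempty M _) ?_) (Nat.zero_le _)
    rintro n ⟨I, hI, hIe, rfl⟩
    rcases Set.subset_singleton_iff_eq.mp hIe with rfl | rfl
    · simp
    · exact absurd hI hind
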